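/- For a nice birth-death chain started at state n, the expected number of birth events before absorption at 0 satisfies E[B(n)] = O(log n). -/

import Mathlib

open MeasureTheory ProbabilityTheory
open scoped ENNReal

/-- Extinction time (first hitting time of the absorbing state `0`) of a process
`N`, valued in `ℝ≥0∞` (it is `∞` if the process never hits `0`). -/
noncomputable def extinctionTime {Ω : Type*} (N : ℕ → Ω → ℕ) (ω : Ω) : ℝ≥0∞ :=
  ⨅ (t : ℕ) (_ : N t ω = 0), (t : ℝ≥0∞)

/-- Total number of birth (increment) steps of the process `N`. Since `0` is
absorbing and `p 0 = 0`, these are exactly the births before extinction. -/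
noncomputable def birthCount {Ω : Type*} (N : ℕ → Ω → ℕ) (ω : Ω) : ℝ≥0∞ :=
  ∑' t : ℕ, if N (t + 1) ω = N t ω + 1 then 1 else 0

/-!
The potential `h(m) = d(1) + ⋯ + d(m)`, with `d(m) = 2C/(Dm)` for `m ≥ 2C/D` and
`d(m) = (d(m+1) + 1)/D` below, is a Lyapunov function for births: from any history, the expected
potential after one step plus the probability that this step is a birth is at most the current
potential. Summing over time gives `E[B(n)] ≤ h(n)`, and `h(n) = O(log n)` because
`d(m) = O(1/m)`.
-/

section TotalExpectation

variable {Ω α : Type*} [MeasurableSpace Ω] {μ : Measure Ω}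

lemma setLIntegral_eq_measure_mul_lintegral_cond {s : Set Ω} (hs : μ s ≠ ∞) (f : Ω → ℝ≥0∞) :
    ∫⁻ ω in s, f ω ∂μ = μ s * ∫⁻ ω, f ω ∂μ[|s] := by
  rw [ProbabilityTheory.cond, lintegral_smul_measure, smul_eq_mul, ← mul_assoc]
  rcases eq_or_ne (μ s) 0 with h | h
  · simp [Measure.restrict_eq_zero.2 h, h]
  · rw [ENNReal.mul_inv_cancel h hs, one_mul]

variable [MeasurableSpace α] [MeasurableSingletonClass α] [Countable α] [IsFiniteMeasure μ]
  {X : Ω → α}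

lemma lintegral_eq_tsum_measure_mul_lintegral_cond (hX : Measurable X) (f : Ω → ℝ≥0∞) :
    ∫⁻ ω, f ω ∂μ = ∑' x, μ (X ⁻¹' {x}) * ∫⁻ ω, f ω ∂μ[|X ⁻¹' {x}] := by
  have hfib : ∀ x, MeasurableSet (X ⁻¹' {x}) := fun x => hX (measurableSet_singleton x)
  have hcover : ⋃ x, X ⁻¹' {x} = Set.univ := by
    rw [← Set.preimage_iUnion, Set.iUnion_of_singleton, Set.preimage_univ]
  rw [← setLIntegral_univ, ← hcover, lintegral_iUnion hfib (pairwise_disjoint_fiber X)]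
  exact tsum_congr fun x => setLIntegral_eq_measure_mul_lintegral_cond (measure_ne_top μ _) f

lemma lintegral_le_lintegral_of_cond_fiber (hX : Measurable X) {f g : Ω → ℝ≥0∞}
    (h : ∀ x, μ (X ⁻¹' {x}) ≠ 0 → ∫⁻ ω, f ω ∂μ[|X ⁻¹' {x}] ≤ ∫⁻ ω, g ω ∂μ[|X ⁻¹' {x}]) :
    ∫⁻ ω, f ω ∂μ ≤ ∫⁻ ω, g ω ∂μ := by
  rw [lintegral_eq_tsum_measure_mul_lintegral_cond hX f,
    lintegral_eq_tsum_measure_mul_lintegral_cond hX g]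
  refine ENNReal.tsum_le_tsum fun x => ?_
  rcases eq_or_ne (μ (X ⁻¹' {x})) 0 with h0 | h0
  · simp [h0]
  · exact mul_le_mul_right (h x h0) _

end TotalExpectation

lemma lintegral_eq_sum_of_sum_measure_singleton_eq_one {α : Type*} [MeasurableSpace α]
    [MeasurableSingletonClass α] {π : Measure α} [IsProbabilityMeasure π] (s : Finset α)
    (hs : ∑ x ∈ s, π {x} = 1) (f : α → ℝ≥0∞) :
    ∫⁻ x, f x ∂π = ∑ x ∈ s, f x * π {x} := by
  rw [sum_measure_singleton] at hs
  rw [← lintegral_finset, Measure.restrict_eq_self_of_ae_mem]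
  exact (prob_compl_eq_zero_iff s.measurableSet).2 hs

lemma ENNReal.tsum_le_of_succ_add_le {a b : ℕ → ℝ≥0∞} (h : ∀ t, a (t + 1) + b t ≤ a t) :
    ∑' t, b t ≤ a 0 := by
  have hpartial : ∀ T, ∑ t ∈ Finset.range T, b t + a T ≤ a 0 := by
    intro T
    induction T with
    | zero => simp
    | succ T ih =>
      calc ∑ t ∈ Finset.range (T + 1), b t + a (T + 1)
          = ∑ t ∈ Finset.range T, b t + (a (T + 1) + b T) := by
            rw [Finset.sum_range_succ]; ring
        _ ≤ ∑ t ∈ Finset.range T, b t + a T := by gcongr; exact h T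
        _ ≤ a 0 := ih
  rw [ENNReal.tsum_eq_iSup_nat]
  exact iSup_le fun T => le_self_add.trans (hpartial T)

noncomputable def birthWeight (C D : ℝ) (m : ℕ) : ℝ :=
  if ⌈2 * C / D⌉₊ ≤ m then 2 * C / D / m else (birthWeight C D (m + 1) + 1) / D
termination_by ⌈2 * C / D⌉₊ - m

noncomputable def birthPotential (C D : ℝ) (m : ℕ) : ℝ :=
  ∑ j ∈ Finset.range m, birthWeight C D (j + 1)

section Potential

variable {C D : ℝ}

lemma birthWeight_of_ceil_le {m : ℕ} (h : ⌈2 * C / D⌉₊ ≤ m) :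
    birthWeight C D m = 2 * C / D / m := by
  rw [birthWeight, if_pos h]

lemma birthWeight_of_lt_ceil {m : ℕ} (h : m < ⌈2 * C / D⌉₊) :
    birthWeight C D m = (birthWeight C D (m + 1) + 1) / D := by
  rw [birthWeight, if_neg h.not_ge]

lemma birthWeight_nonneg (hC : 0 ≤ C) (hD : 0 ≤ D) (m : ℕ) : 0 ≤ birthWeight C D m := by
  rcases le_or_gt ⌈2 * C / D⌉₊ m with h | h
  · rw [birthWeight_of_ceil_le h]; positivity
  · rw [birthWeight_of_lt_ceil h]
    have := birthWeight_nonneg hC hD (m + 1)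
    positivity
termination_by ⌈2 * C / D⌉₊ - m

/-- Above `2C/D` this follows from `p ≤ C/m` and `d(m) = 2C/(Dm)`; below, `d` grows by the
factor `1/D` at each step down, which absorbs `p ≤ 1`. -/
lemma birthWeight_drift (hC : 0 ≤ C) (hD : 0 < D) {m : ℕ} (hm : 0 < m) {p q : ℝ}
    (hpC : p ≤ C / m) (hpq : p + q ≤ 1) (hqD : D ≤ q) :
    p * (birthWeight C D (m + 1) + 1) ≤ q * birthWeight C D m := by
  have hm' : (0 : ℝ) < m := by exact_mod_cast hm
  rcases le_or_gt ⌈2 * C / D⌉₊ m with h | h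
  · rw [birthWeight_of_ceil_le (h.trans m.le_succ), birthWeight_of_ceil_le h]
    have hK : 2 * C / D ≤ m + 1 := by
      have : (⌈2 * C / D⌉₊ : ℝ) ≤ m := by exact_mod_cast h
      linarith [Nat.le_ceil (2 * C / D)]
    have hfrac : 2 * C / D / ((m + 1 : ℕ) : ℝ) ≤ 1 := by
      push_cast; rw [div_le_one (by positivity)]; exact hK
    calc p * (2 * C / D / ((m + 1 : ℕ) : ℝ) + 1) ≤ C / m * 2 := by
          gcongr
          linarith
      _ = D * (2 * C / D / m) := by field_simp
      _ ≤ q * (2 * C / D / m) := by gcongr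
  · rw [birthWeight_of_lt_ceil h]
    have hd := birthWeight_nonneg hC hD.le (m + 1)
    calc p * (birthWeight C D (m + 1) + 1) ≤ birthWeight C D (m + 1) + 1 := by
          nlinarith
      _ = D * ((birthWeight C D (m + 1) + 1) / D) := by field_simp
      _ ≤ q * ((birthWeight C D (m + 1) + 1) / D) := by gcongr

lemma birthPotential_succ (m : ℕ) :
    birthPotential C D (m + 1) = birthPotential C D m + birthWeight C D (m + 1) :=
  Finset.sum_range_succ _ _

lemma birthPotential_nonneg (hC : 0 ≤ C) (hD : 0 ≤ D) (m : ℕ) : 0 ≤ birthPotential C D m :=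
  Finset.sum_nonneg fun j _ => birthWeight_nonneg hC hD (j + 1)

lemma birthPotential_drift (hC : 0 ≤ C) (hD : 0 < D) (k : ℕ) {p q : ℝ}
    (hpC : p ≤ C / (k + 1 : ℕ)) (hpq : p + q ≤ 1) (hqD : D ≤ q) :
    birthPotential C D k * q + birthPotential C D (k + 1) * (1 - p - q)
      + (birthPotential C D (k + 2) + 1) * p ≤ birthPotential C D (k + 1) := by
  have := birthWeight_drift hC hD k.succ_pos hpC hpq hqD
  rw [birthPotential_succ (k + 1), birthPotential_succ k]
  linarith

lemma exists_birthWeight_le (hC : 0 < C) (hD : 0 < D) :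
    ∃ M, 0 < M ∧ ∀ m : ℕ, 0 < m → birthWeight C D m ≤ M / m := by
  set K := ⌈2 * C / D⌉₊
  have hterm : ∀ j : ℕ, 0 ≤ (j : ℝ) * birthWeight C D j := fun j =>
    mul_nonneg j.cast_nonneg (birthWeight_nonneg hC.le hD.le j)
  have hsum : 0 ≤ ∑ j ∈ Finset.range K, (j : ℝ) * birthWeight C D j :=
    Finset.sum_nonneg fun j _ => hterm j
  have ha : 0 < 2 * C / D := by positivity
  refine ⟨2 * C / D + ∑ j ∈ Finset.range K, (j : ℝ) * birthWeight C D j, by positivity,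
    fun m hm => ?_⟩
  have hm' : (0 : ℝ) < m := by exact_mod_cast hm
  rw [le_div_iff₀ hm']
  rcases le_or_gt K m with h | h
  · rw [birthWeight_of_ceil_le h, div_mul_cancel₀ _ hm'.ne']
    linarith
  · rw [mul_comm]
    linarith [Finset.single_le_sum (fun j _ => hterm j) (Finset.mem_range.2 h)]

lemma exists_birthPotential_le_mul_log (hC : 0 < C) (hD : 0 < D) :
    ∃ c, 0 < c ∧ ∀ n : ℕ, 2 ≤ n → birthPotential C D n ≤ c * Real.log n := by
  obtain ⟨M, hM, hle⟩ := exists_birthWeight_le hC hD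
  have hlog2 : 0 < Real.log 2 := Real.log_pos one_lt_two
  refine ⟨M * (1 / Real.log 2 + 1), by positivity, fun n hn => ?_⟩
  have hlogn : Real.log 2 ≤ Real.log n := Real.log_le_log two_pos (by exact_mod_cast hn)
  have hharm : birthPotential C D n ≤ M * harmonic n := by
    rw [birthPotential, harmonic, Rat.cast_sum, Finset.mul_sum]
    refine Finset.sum_le_sum fun j _ => ?_
    rw [Rat.cast_inv, Rat.cast_natCast, ← div_eq_mul_inv]
    exact hle (j + 1) j.succ_pos
  calc birthPotential C D n ≤ M * (1 + Real.log n) :=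
        hharm.trans (mul_le_mul_of_nonneg_left (harmonic_le_one_add_log n) hM.le)
    _ ≤ M * (1 / Real.log 2 + 1) * Real.log n := by
        rw [mul_assoc]
        gcongr
        rw [add_mul, one_mul, one_div_mul_eq_div]
        linarith [(one_le_div hlog2).2 hlogn]

end Potential

structure IsNiceRates (C D : ℝ) (p q : ℕ → ℝ) : Prop where
  p_nonneg : ∀ m, 0 ≤ p m
  add_le_one : ∀ m, p m + q m ≤ 1
  p_zero : p 0 = 0
  q_zero : q 0 = 0
  p_le : ∀ m : ℕ, 0 < m → p m ≤ C / m
  le_q : ∀ m : ℕ, 0 < m → D ≤ q m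

lemma lintegral_birthPotential_add_birth_le_of_succ {C D : ℝ} (hC : 0 ≤ C) (hD : 0 < D) (k : ℕ)
    {p q : ℝ} (hp : 0 ≤ p) (hpC : p ≤ C / (k + 1 : ℕ)) (hpq : p + q ≤ 1) (hqD : D ≤ q)
    {π : Measure ℕ} [IsProbabilityMeasure π] (hdeath : π {k} = ENNReal.ofReal q)
    (hhold : π {k + 1} = ENNReal.ofReal (1 - p - q)) (hbirth : π {k + 2} = ENNReal.ofReal p) :
    ∫⁻ j, ENNReal.ofReal (birthPotential C D j) + ({k + 2} : Set ℕ).indicator 1 j ∂π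
      ≤ ENNReal.ofReal (birthPotential C D (k + 1)) := by
  have hH := birthPotential_nonneg hC hD.le (C := C)
  have hq : 0 ≤ q := hD.le.trans hqD
  have hr : 0 ≤ 1 - p - q := by linarith
  have hsum : ∀ f : ℕ → ℝ≥0∞,
      ∑ x ∈ {k, k + 1, k + 2}, f x = f k + f (k + 1) + f (k + 2) := by
    intro f
    rw [Finset.sum_insert (by simp), Finset.sum_pair (by omega), add_assoc]
  rw [lintegral_eq_sum_of_sum_measure_singleton_eq_one {k, k + 1, k + 2}, hsum]
  · simp only [hdeath, hhold, hbirth, Set.indicator_apply, Set.mem_singleton_iff,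
      show k ≠ k + 2 by omega, show k + 1 ≠ k + 2 by omega, if_false, if_true, add_zero,
      Pi.one_apply]
    rw [← ENNReal.ofReal_one, ← ENNReal.ofReal_add (hH _) zero_le_one,
      ← ENNReal.ofReal_mul (hH _), ← ENNReal.ofReal_mul (hH _),
      ← ENNReal.ofReal_mul (add_nonneg (hH _) zero_le_one),
      ← ENNReal.ofReal_add (mul_nonneg (hH _) hq) (mul_nonneg (hH _) hr),
      ← ENNReal.ofReal_add (add_nonneg (mul_nonneg (hH _) hq) (mul_nonneg (hH _) hr))
        (mul_nonneg (add_nonneg (hH _) zero_le_one) hp)]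
    exact ENNReal.ofReal_le_ofReal (birthPotential_drift hC hD k hpC hpq hqD)
  · rw [hsum, hdeath, hhold, hbirth, ← ENNReal.ofReal_add hq hr,
      ← ENNReal.ofReal_add (add_nonneg hq hr) hp]
    simp

lemma lintegral_birthPotential_add_birth_le {C D : ℝ} {p q : ℕ → ℝ} (hC : 0 ≤ C)
    (hD : 0 < D) (hpq : IsNiceRates C D p q) {π : Measure ℕ} [IsProbabilityMeasure π] (m : ℕ)
    (hbirth : π {m + 1} = ENNReal.ofReal (p m))
    (hhold : π {m} = ENNReal.ofReal (1 - p m - q m))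
    (hdeath : 0 < m → π {m - 1} = ENNReal.ofReal (q m)) :
    ∫⁻ j, ENNReal.ofReal (birthPotential C D j) + ({m + 1} : Set ℕ).indicator 1 j ∂π
      ≤ ENNReal.ofReal (birthPotential C D m) := by
  cases m with
  | zero =>
    rw [hpq.p_zero, hpq.q_zero, sub_zero, sub_zero, ENNReal.ofReal_one] at hhold
    rw [lintegral_eq_sum_of_sum_measure_singleton_eq_one {0} (by simpa using hhold)]
    simp [birthPotential]
  | succ k =>
    exact lintegral_birthPotential_add_birth_le_of_succ hC hD k (hpq.p_nonneg _)
      (hpq.p_le _ k.succ_pos) (hpq.add_le_one _) (hpq.le_q _ k.succ_pos)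
      (by simpa using hdeath k.succ_pos) hhold hbirth

section Chain

variable {Ω : Type*} {N : ℕ → Ω → ℕ}

/-- Histories range over the countable type `Fin (t + 1) → ℕ`, so that conditioning on them is
conditioning on a countable partition. -/
def history (N : ℕ → Ω → ℕ) (t : ℕ) (ω : Ω) : Fin (t + 1) → ℕ := fun s => N s ω

lemma measurable_history [MeasurableSpace Ω] (hN : ∀ t, Measurable (N t)) (t : ℕ) :
    Measurable (history N t) :=
  measurable_pi_lambda _ fun s => hN s

lemma history_preimage_singleton (t : ℕ) (v : Fin (t + 1) → ℕ) :
    history N t ⁻¹' {v} = {ω | ∀ s ≤ t, N s ω = v (Fin.clamp s t)} := by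
  ext ω
  simp only [Set.mem_preimage, Set.mem_singleton_iff, funext_iff, history]
  constructor
  · intro h s hs
    rw [← h]
    simp [Fin.clamp, min_eq_left hs]
  · intro h s
    rw [h s (Nat.lt_succ_iff.1 s.isLt)]
    congr
    ext
    simp [Fin.clamp, Nat.lt_succ_iff.1 s.isLt]

variable [MeasurableSpace Ω] {μ : Measure Ω}

structure IsBirthDeathChain (μ : Measure Ω) (N : ℕ → Ω → ℕ) (p q : ℕ → ℝ) : Prop where
  birth : ∀ (t : ℕ) (path : ℕ → ℕ),
    μ {ω | ∀ s ≤ t, N s ω = path s} ≠ 0 →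
    μ[|{ω | ∀ s ≤ t, N s ω = path s}] {ω | N (t + 1) ω = path t + 1}
      = ENNReal.ofReal (p (path t))
  death : ∀ (t : ℕ) (path : ℕ → ℕ), 0 < path t →
    μ {ω | ∀ s ≤ t, N s ω = path s} ≠ 0 →
    μ[|{ω | ∀ s ≤ t, N s ω = path s}] {ω | N (t + 1) ω = path t - 1}
      = ENNReal.ofReal (q (path t))
  hold : ∀ (t : ℕ) (path : ℕ → ℕ),
    μ {ω | ∀ s ≤ t, N s ω = path s} ≠ 0 →
    μ[|{ω | ∀ s ≤ t, N s ω = path s}] {ω | N (t + 1) ω = path t}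
      = ENNReal.ofReal (1 - p (path t) - q (path t))

lemma lintegral_birthCount (hN : ∀ t, Measurable (N t)) :
    ∫⁻ ω, birthCount N ω ∂μ = ∑' t, μ {ω | N (t + 1) ω = N t ω + 1} := by
  have hbirth : ∀ t, MeasurableSet {ω | N (t + 1) ω = N t ω + 1} := fun t =>
    measurableSet_eq_fun (hN _) ((hN t).add_const 1)
  have hind : ∀ t ω, (if N (t + 1) ω = N t ω + 1 then (1 : ℝ≥0∞) else 0)
      = {ω | N (t + 1) ω = N t ω + 1}.indicator 1 ω := fun t ω => by
    simp [Set.indicator_apply]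
  simp_rw [birthCount, hind]
  rw [lintegral_tsum fun t => (measurable_one.indicator (hbirth t)).aemeasurable]
  exact tsum_congr fun t => lintegral_indicator_one (hbirth t)

namespace IsBirthDeathChain

variable {C D : ℝ} {p q : ℕ → ℝ} [IsFiniteMeasure μ]

lemma lintegral_cond_history_le (hchain : IsBirthDeathChain μ N p q) (hC : 0 ≤ C) (hD : 0 < D)
    (hpq : IsNiceRates C D p q) (hN : ∀ t, Measurable (N t)) (t : ℕ) (v : Fin (t + 1) → ℕ)
    (hv : μ (history N t ⁻¹' {v}) ≠ 0) :
    ∫⁻ ω, ENNReal.ofReal (birthPotential C D (N (t + 1) ω))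
        + {ω | N (t + 1) ω = N t ω + 1}.indicator 1 ω ∂μ[|history N t ⁻¹' {v}]
      ≤ ∫⁻ ω, ENNReal.ofReal (birthPotential C D (N t ω)) ∂μ[|history N t ⁻¹' {v}] := by
  have hmeas := measurable_history hN t (measurableSet_singleton v)
  rw [history_preimage_singleton] at hv hmeas ⊢
  set path : ℕ → ℕ := fun s => v (Fin.clamp s t)
  set ν := μ[|{ω | ∀ s ≤ t, N s ω = path s}]
  have : IsProbabilityMeasure ν := cond_isProbabilityMeasure hv
  have hnow : ∀ᵐ ω ∂ν, N t ω = path t := (ae_cond_mem hmeas).mono fun ω hω => hω t le_rfl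
  have hstep : ∀ j, ν.map (N (t + 1)) {j} = ν {ω | N (t + 1) ω = j} := fun j =>
    Measure.map_apply (hN _) (measurableSet_singleton j)
  have : IsProbabilityMeasure (ν.map (N (t + 1))) :=
    Measure.isProbabilityMeasure_map (hN _).aemeasurable
  calc ∫⁻ ω, ENNReal.ofReal (birthPotential C D (N (t + 1) ω))
          + {ω | N (t + 1) ω = N t ω + 1}.indicator 1 ω ∂ν
      = ∫⁻ ω, ENNReal.ofReal (birthPotential C D (N (t + 1) ω))
          + ({path t + 1} : Set ℕ).indicator 1 (N (t + 1) ω) ∂ν := by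
        refine lintegral_congr_ae (hnow.mono fun ω hω => ?_)
        simp [Set.indicator_apply, hω]
    _ = ∫⁻ j, ENNReal.ofReal (birthPotential C D j)
          + ({path t + 1} : Set ℕ).indicator 1 j ∂ν.map (N (t + 1)) := by
        rw [lintegral_map .of_discrete (hN _)]
    _ ≤ ENNReal.ofReal (birthPotential C D (path t)) :=
        lintegral_birthPotential_add_birth_le hC hD hpq (path t)
          (by rw [hstep]; exact hchain.birth t path hv)
          (by rw [hstep]; exact hchain.hold t path hv)
          (fun hpos => by rw [hstep]; exact hchain.death t path hpos hv)
    _ = ∫⁻ ω, ENNReal.ofReal (birthPotential C D (N t ω)) ∂ν := by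
        rw [lintegral_congr_ae (hnow.mono fun ω hω => by rw [hω]), lintegral_const,
          measure_univ, mul_one]

lemma lintegral_birthPotential_succ_add_le (hchain : IsBirthDeathChain μ N p q) (hC : 0 ≤ C)
    (hD : 0 < D) (hpq : IsNiceRates C D p q) (hN : ∀ t, Measurable (N t)) (t : ℕ) :
    ∫⁻ ω, ENNReal.ofReal (birthPotential C D (N (t + 1) ω)) ∂μ
        + μ {ω | N (t + 1) ω = N t ω + 1}
      ≤ ∫⁻ ω, ENNReal.ofReal (birthPotential C D (N t ω)) ∂μ := by
  have hbirth : MeasurableSet {ω | N (t + 1) ω = N t ω + 1} :=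
    measurableSet_eq_fun (hN _) ((hN t).add_const 1)
  rw [← lintegral_indicator_one hbirth,
    ← lintegral_add_right _ (measurable_one.indicator hbirth)]
  exact lintegral_le_lintegral_of_cond_fiber (measurable_history hN t)
    (hchain.lintegral_cond_history_le hC hD hpq hN t)

end IsBirthDeathChain

lemma IsBirthDeathChain.lintegral_birthCount_le [IsProbabilityMeasure μ] {C D : ℝ}
    {p q : ℕ → ℝ} (hchain : IsBirthDeathChain μ N p q) (hC : 0 ≤ C) (hD : 0 < D)
    (hpq : IsNiceRates C D p q) (hN : ∀ t, Measurable (N t)) {n : ℕ} (hN0 : ∀ ω, N 0 ω = n) :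
    ∫⁻ ω, birthCount N ω ∂μ ≤ ENNReal.ofReal (birthPotential C D n) := by
  rw [lintegral_birthCount hN]
  calc ∑' t, μ {ω | N (t + 1) ω = N t ω + 1}
      ≤ ∫⁻ ω, ENNReal.ofReal (birthPotential C D (N 0 ω)) ∂μ :=
        ENNReal.tsum_le_of_succ_add_le
          (hchain.lintegral_birthPotential_succ_add_le hC hD hpq hN)
    _ = ENNReal.ofReal (birthPotential C D n) := by simp [hN0]

end Chain

/-- For a nice birth-death chain started at `n`, the expected number of births before
absorption at `0` is `O(log n)`: there is a constant `c` depending only on `C, D`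
with `E[B(n)] ≤ c·log n` for all `n ≥ 2`. -/
theorem stmt_6 (C D : ℝ) (hC : 0 < C) (hD : 0 < D) :
    ∃ c : ℝ, 0 < c ∧
      ∀ n : ℕ, 2 ≤ n →
      ∀ (Ω : Type) (_ : MeasurableSpace Ω) (μ : Measure Ω), IsProbabilityMeasure μ →
      ∀ (N : ℕ → Ω → ℕ) (p q : ℕ → ℝ),
        (∀ t, Measurable (N t)) →
        (∀ m, 0 ≤ p m) → (∀ m, 0 ≤ q m) → (∀ m, p m + q m ≤ 1) →
        p 0 = 0 → q 0 = 0 →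
        (∀ m : ℕ, 0 < m → p m ≤ C / m) →
        (∀ m : ℕ, 0 < m → D ≤ q m) →
        (∀ ω, N 0 ω = n) →
        -- birth transitions, conditionally on any past trajectory
        (∀ (t : ℕ) (path : ℕ → ℕ),
          μ {ω | ∀ s ≤ t, N s ω = path s} ≠ 0 →
          μ[|{ω | ∀ s ≤ t, N s ω = path s}] {ω | N (t + 1) ω = path t + 1}
            = ENNReal.ofReal (p (path t))) →
        -- death transitions
        (∀ (t : ℕ) (path : ℕ → ℕ), 0 < path t →
          μ {ω | ∀ s ≤ t, N s ω = path s} ≠ 0 →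
          μ[|{ω | ∀ s ≤ t, N s ω = path s}] {ω | N (t + 1) ω = path t - 1}
            = ENNReal.ofReal (q (path t))) →
        -- holding steps
        (∀ (t : ℕ) (path : ℕ → ℕ),
          μ {ω | ∀ s ≤ t, N s ω = path s} ≠ 0 →
          μ[|{ω | ∀ s ≤ t, N s ω = path s}] {ω | N (t + 1) ω = path t}
            = ENNReal.ofReal (1 - p (path t) - q (path t))) →
        ∫⁻ ω, birthCount N ω ∂μ ≤ ENNReal.ofReal (c * Real.log n) := by
  obtain ⟨c, hc, hlog⟩ := exists_birthPotential_le_mul_log hC hD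
  refine ⟨c, hc, fun n hn Ω _ μ _ N p q hN hp _ hpq hp0 hq0 hpC hqD hN0 hbirth hdeath hhold =>
    ?_⟩
  calc ∫⁻ ω, birthCount N ω ∂μ ≤ ENNReal.ofReal (birthPotential C D n) :=
        IsBirthDeathChain.lintegral_birthCount_le ⟨hbirth, hdeath, hhold⟩ hC.le hD
          ⟨hp, hpq, hp0, hq0, hpC, hqD⟩ hN hN0
    _ ≤ ENNReal.ofReal (c * Real.log n) := ENNReal.ofReal_le_ofReal (hlog n hn)
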